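/- Let f₁,…,f_n be monotone linear functions and σ a permutation of [n]. If β(f^σ) < min{β(f^{σ_1}), β(f^{σ_{n−1}})}, then f^σ, f_{σ(1)} and f_{σ(n)} are non-identical and θ(f^σ)+π ∈ (θ(f_{σ(n)}), θ(f_{σ(1)}))_{2π}. If β(f^σ) > max{β(f^{σ_1}), β(f^{σ_{n−1}})}, then f^σ, f_{σ(1)} and f_{σ(n)} are non-identical and θ(f^σ) ∈ (θ(f_{σ(n)}), θ(f_{σ(1)}))_{2π}. -/
import Mathlib


/-- A linear function `x ↦ a*x + b`. -/
structure LinFun where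
  a : ℝ
  b : ℝ

namespace LinFun

/-- Evaluation of a linear function. -/
def eval (f : LinFun) (x : ℝ) : ℝ := f.a * x + f.b

/-- Composition: `h.comp g` is the linear function `x ↦ h (g x)`. -/
def comp (h g : LinFun) : LinFun := ⟨h.a * g.a, h.a * g.b + h.b⟩

/-- The identical linear function `x ↦ x`. -/
def idf : LinFun := ⟨1, 0⟩

/-- `f` is the identical function (equivalently, its vector `(β f, 1 - α f)` is `(0,0)`,
i.e. its angle is `⊥`). -/
def IsId (f : LinFun) : Prop := f = idf

/-- The Euclidean norm of the vector `(β f, 1 - α f)` associated to `f`. -/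
noncomputable def vecNorm (f : LinFun) : ℝ := Real.sqrt (f.b ^ 2 + (1 - f.a) ^ 2)

/-- The polar angle in `[0, 2π)` of the vector `(β f, 1 - α f)` associated to `f`
(meaningful only when `f` is not identical). -/
noncomputable def theta (f : LinFun) : ℝ :=
  if 0 ≤ Complex.arg ⟨f.b, 1 - f.a⟩ then Complex.arg ⟨f.b, 1 - f.a⟩
  else Complex.arg ⟨f.b, 1 - f.a⟩ + 2 * Real.pi

end LinFun

/-- Congruence of angles modulo `2π`: `x ≡_{2π} y`. -/
def Cong (x y : ℝ) : Prop := ∃ k : ℤ, x - y = 2 * Real.pi * k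

/-- The set `[t1, t2]_{2π}`. -/
def Icc2pi (t1 t2 : ℝ) : Set ℝ :=
  {θ | ∃ l1 l2 : ℝ, Cong l1 t1 ∧ Cong l2 t2 ∧ 0 ≤ l2 - l1 ∧ l2 - l1 < 2 * Real.pi ∧
    θ ∈ Set.Icc l1 l2}

/-- The set `(t1, t2)_{2π}`. -/
def Ioo2pi (t1 t2 : ℝ) : Set ℝ :=
  {θ | ∃ l1 l2 : ℝ, Cong l1 t1 ∧ Cong l2 t2 ∧ 0 ≤ l2 - l1 ∧ l2 - l1 < 2 * Real.pi ∧
    θ ∈ Set.Ioo l1 l2}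

/-- Composite of a list of linear functions: `compList [g₁, …, g_m] = g_m ∘ ⋯ ∘ g₁`. -/
def compList (L : List LinFun) : LinFun := L.foldl (fun acc g => g.comp acc) LinFun.idf

/-- The list `f_{σ(1)}, …, f_{σ(n)}` (0-indexed positions). -/
def permList {n : ℕ} (f : Fin n → LinFun) (σ : Equiv.Perm (Fin n)) : List LinFun :=
  List.ofFn fun i => f (σ i)

/-- `f^σ = f_{σ(n)} ∘ ⋯ ∘ f_{σ(1)}`. -/
def permComp {n : ℕ} (f : Fin n → LinFun) (σ : Equiv.Perm (Fin n)) : LinFun :=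
  compList (permList f σ)

/-- The composite of the functions at the (0-indexed) positions `a, a+1, …, b` of `σ`:
`f_{σ(b)} ∘ ⋯ ∘ f_{σ(a)}` (in 0-indexed notation). -/
def segComp {n : ℕ} (f : Fin n → LinFun) (σ : Equiv.Perm (Fin n)) (a b : ℕ) : LinFun :=
  compList (((permList f σ).drop a).take (b + 1 - a))

/-- The composite corresponding to the `k`-shift `σ_k` of `σ`:
`f^{σ_k} = f_{σ(k)} ∘ ⋯ ∘ f_{σ(1)} ∘ f_{σ(n)} ∘ ⋯ ∘ f_{σ(k+1)}` (1-indexed notation). -/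
def shiftComp {n : ℕ} (f : Fin n → LinFun) (σ : Equiv.Perm (Fin n)) (k : ℕ) : LinFun :=
  compList ((permList f σ).rotate k)

/-- `σ` is a minimum (optimal) permutation for `f₁, …, f_n`. -/
def IsMinimum {n : ℕ} (f : Fin n → LinFun) (σ : Equiv.Perm (Fin n)) : Prop :=
  ∀ ρ : Equiv.Perm (Fin n), (permComp f σ).b ≤ (permComp f ρ).b

/-- `μ` belongs to the neighbourhood `N(σ)`: it is obtained from `σ` by swapping two
adjacent blocks of positions, `(l, …, m)` and `(m+1, …, r)` (0-indexed, `l ≤ m < r < n`). -/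
def InNbhd {n : ℕ} (σ μ : Equiv.Perm (Fin n)) : Prop :=
  ∃ (l m r : ℕ) (_ : l ≤ m) (_ : m < r) (_ : r < n),
    (∀ i : Fin n, (i.val < l ∨ r < i.val) → μ i = σ i) ∧
    (∀ i : Fin n, ∀ _ : l ≤ i.val, ∀ _ : i.val < l + r - m,
      μ i = σ ⟨i.val + m + 1 - l, by omega⟩) ∧
    (∀ i : Fin n, ∀ _ : l + r - m ≤ i.val, ∀ _ : i.val ≤ r,
      μ i = σ ⟨i.val + m - r, by omega⟩)

/-- `σ` is locally optimal for `f₁, …, f_n`. -/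
def LocallyOptimal {n : ℕ} (f : Fin n → LinFun) (σ : Equiv.Perm (Fin n)) : Prop :=
  ∀ μ : Equiv.Perm (Fin n), InNbhd σ μ → (permComp f σ).b ≤ (permComp f μ).b

/-- `σ` is counterclockwise: ignoring the identical functions, some rotation of the sequence
of angles `θ(f_{σ(1)}), …, θ(f_{σ(n)})` is nondecreasing. -/
def Counterclockwise {n : ℕ} (f : Fin n → LinFun) (σ : Equiv.Perm (Fin n)) : Prop :=
  ∃ c : ℕ, ∀ i j : Fin n, ¬ (f (σ i)).IsId → ¬ (f (σ j)).IsId →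
    ((c ≤ i.val ∧ i ≤ j) ∨ (i ≤ j ∧ j.val < c) ∨ (c ≤ i.val ∧ j.val < c)) →
    (f (σ i)).theta ≤ (f (σ j)).theta

/-- `f₁, …, f_n` are colinear: all vectors lie on one line through the origin. -/
def Colinear {n : ℕ} (f : Fin n → LinFun) : Prop :=
  ∃ lam : ℝ, ∀ i : Fin n,
    (f i).IsId ∨ Cong ((f i).theta) lam ∨ Cong ((f i).theta) (lam + Real.pi)

/-- `f₁, …, f_n` are potentially identical: some counterclockwise permutation composes
to the identical function. -/
def PotentiallyIdentical {n : ℕ} (f : Fin n → LinFun) : Prop :=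
  ∃ σ : Equiv.Perm (Fin n), Counterclockwise f σ ∧ (permComp f σ).IsId

/-- The ε-perturbation `f^{(ε)}` of a linear function. -/
noncomputable def epsPert (f : LinFun) (ε : ℝ) : LinFun := if f.a = 0 then ⟨ε, f.b⟩ else f


section Aux

open LinFun

/-- cross product of the associated vectors -/
def crossL (u v : LinFun) : ℝ := u.b * (1 - v.a) - (1 - u.a) * v.b

lemma LinFun.ext' {f g : LinFun} (ha : f.a = g.a) (hb : f.b = g.b) : f = g := by
  cases f; cases g; simp_all

lemma comp_idf (f : LinFun) : f.comp LinFun.idf = f := by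
  apply LinFun.ext' <;> simp [LinFun.comp, LinFun.idf]

lemma comp_assoc (h g f : LinFun) : (h.comp g).comp f = h.comp (g.comp f) := by
  apply LinFun.ext' <;> (simp [LinFun.comp]; ring)

lemma foldl_comp (L : List LinFun) : ∀ acc : LinFun,
    L.foldl (fun a g => g.comp a) acc = (compList L).comp acc := by
  induction L with
  | nil => intro acc; apply LinFun.ext' <;> simp [compList, LinFun.idf, LinFun.comp]
  | cons x L ih =>
      intro acc
      show L.foldl _ (x.comp acc) = (compList (x :: L)).comp acc
      rw [ih]
      have : compList (x :: L) = (compList L).comp x := by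
        show L.foldl _ (x.comp LinFun.idf) = _
        rw [ih, comp_idf]
      rw [this, comp_assoc]

lemma compList_cons (x : LinFun) (L : List LinFun) :
    compList (x :: L) = (compList L).comp x := by
  show L.foldl _ (x.comp LinFun.idf) = _
  rw [foldl_comp, comp_idf]

lemma compList_append_singleton (L : List LinFun) (g : LinFun) :
    compList (L ++ [g]) = g.comp (compList L) := by
  unfold compList
  rw [List.foldl_append]
  rfl

/-- the complex number associated to a linear function -/
noncomputable def czL (f : LinFun) : ℂ := ⟨f.b, 1 - f.a⟩

lemma czL_ne_zero {f : LinFun} (h : ¬ f.IsId) : czL f ≠ 0 := by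
  intro hz
  apply h
  have hre : (czL f).re = 0 := by rw [hz]; simp
  have him : (czL f).im = 0 := by rw [hz]; simp
  simp only [czL] at hre him
  exact LinFun.ext' (show f.a = (1:ℝ) by linarith) (show f.b = (0:ℝ) by linarith)

lemma notId_left {u v : LinFun} (h : crossL u v ≠ 0) : ¬ u.IsId := by
  intro hu; rw [hu] at h; simp [crossL, LinFun.idf] at h

lemma notId_right {u v : LinFun} (h : crossL u v ≠ 0) : ¬ v.IsId := by
  intro hv; rw [hv] at h; simp [crossL, LinFun.idf] at h

lemma cong_theta_arg (f : LinFun) : Cong f.theta (czL f).arg := by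
  unfold LinFun.theta czL Cong
  split
  · exact ⟨0, by push_cast; ring⟩
  · exact ⟨1, by push_cast; ring⟩

lemma cong_trans' {a b c : ℝ} (h1 : Cong a b) (h2 : Cong b c) : Cong a c := by
  obtain ⟨k1, hk1⟩ := h1; obtain ⟨k2, hk2⟩ := h2
  exact ⟨k1 + k2, by push_cast; linarith⟩

lemma arg_mem_Ioo_of_im_pos {z : ℂ} (h : 0 < z.im) : z.arg ∈ Set.Ioo 0 Real.pi := by
  constructor
  · rcases lt_or_eq_of_le (Complex.arg_nonneg_iff.2 h.le) with h' | h'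
    · exact h'
    · exfalso
      have := Complex.arg_eq_zero_iff.1 h'.symm
      linarith [this.2]
  · exact Complex.arg_lt_pi_iff.2 (Or.inr (ne_of_gt h))

lemma angle_sub (x y : ℝ) (h : (x : Real.Angle) = (y : Real.Angle)) : Cong x y := by
  exact Real.Angle.angle_eq_iff_two_pi_dvd_sub.1 h

/-- Master geometric lemma -/
lemma master {u v w : ℂ} (hu : u ≠ 0) (hv : v ≠ 0) (hw : w ≠ 0)
    (h1 : 0 < u.re * w.im - u.im * w.re) (h2 : 0 < w.re * v.im - w.im * v.re)
    {φ tu tv : ℝ} (hφ : Cong φ w.arg) (htu : Cong tu u.arg) (htv : Cong tv v.arg) :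
    φ ∈ Ioo2pi tu tv := by
  have hnsqu : 0 < Complex.normSq u := Complex.normSq_pos.2 hu
  have hnsqw : 0 < Complex.normSq w := Complex.normSq_pos.2 hw
  have him1 : 0 < (w / u).im := by
    rw [Complex.div_im]
    have : w.im * u.re / Complex.normSq u - w.re * u.im / Complex.normSq u
        = (u.re * w.im - u.im * w.re) / Complex.normSq u := by ring
    rw [this]
    positivity
  have him2 : 0 < (v / w).im := by
    rw [Complex.div_im]
    have : v.im * w.re / Complex.normSq w - v.re * w.im / Complex.normSq w
        = (w.re * v.im - w.im * v.re) / Complex.normSq w := by ring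
    rw [this]
    positivity
  set d1 := (w / u).arg with hd1def
  set d2 := (v / w).arg with hd2def
  have hd1 : d1 ∈ Set.Ioo 0 Real.pi := arg_mem_Ioo_of_im_pos him1
  have hd2 : d2 ∈ Set.Ioo 0 Real.pi := arg_mem_Ioo_of_im_pos him2
  have hc1 : Cong d1 (w.arg - u.arg) :=
    angle_sub _ _ (by push_cast [Real.Angle.coe_sub]; exact Complex.arg_div_coe_angle hw hu)
  have hc2 : Cong d2 (v.arg - w.arg) :=
    angle_sub _ _ (by push_cast [Real.Angle.coe_sub]; exact Complex.arg_div_coe_angle hv hw)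
  obtain ⟨k0, hk0⟩ := hφ
  obtain ⟨ku, hku⟩ := htu
  obtain ⟨kv, hkv⟩ := htv
  obtain ⟨k1, hk1⟩ := hc1
  obtain ⟨k2, hk2⟩ := hc2
  refine ⟨φ - d1, φ + d2, ⟨k0 - k1 - ku, by push_cast; linarith⟩,
    ⟨k0 + k2 - kv, by push_cast; linarith⟩, ?_, ?_, ?_, ?_⟩
  · linarith [hd1.1, hd2.1]
  · linarith [hd1.2, hd2.2]
  · linarith [hd1.1]
  · linarith [hd2.1]

end Aux

/-- adjacent property of the composites of the shifts of a permutation.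
Positions are 0-indexed: `σ ⟨0, _⟩` is `f_{σ(1)}` and `σ ⟨n-1, _⟩` is `f_{σ(n)}`. -/
theorem stmt10 {n : ℕ} (f : Fin n → LinFun) (hf : ∀ i, 0 < (f i).a)
    (σ : Equiv.Perm (Fin n)) (hn : 0 < n) :
    ((permComp f σ).b < min (shiftComp f σ 1).b (shiftComp f σ (n - 1)).b →
      ¬ (permComp f σ).IsId ∧ ¬ (f (σ ⟨0, hn⟩)).IsId ∧
        ¬ (f (σ ⟨n - 1, by omega⟩)).IsId ∧
      (permComp f σ).theta + Real.pi ∈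
        Ioo2pi ((f (σ ⟨n - 1, by omega⟩)).theta) ((f (σ ⟨0, hn⟩)).theta)) ∧
    ((permComp f σ).b > max (shiftComp f σ 1).b (shiftComp f σ (n - 1)).b →
      ¬ (permComp f σ).IsId ∧ ¬ (f (σ ⟨0, hn⟩)).IsId ∧
        ¬ (f (σ ⟨n - 1, by omega⟩)).IsId ∧
      (permComp f σ).theta ∈
        Ioo2pi ((f (σ ⟨n - 1, by omega⟩)).theta) ((f (σ ⟨0, hn⟩)).theta)) := by
  obtain ⟨m, rfl⟩ : ∃ m, n = m + 1 := ⟨n - 1, by omega⟩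
  simp only [Nat.add_sub_cancel]
  have h00 : (⟨0, hn⟩ : Fin (m + 1)) = 0 := by ext; simp
  have hlast : (⟨m, by omega⟩ : Fin (m + 1)) = Fin.last m := rfl
  set g1 : LinFun := f (σ ⟨0, hn⟩) with hg1
  set gn : LinFun := f (σ ⟨m, by omega⟩) with hgn
  set T : List LinFun := List.ofFn (fun i : Fin m => f (σ i.succ)) with hT
  set P : List LinFun := List.ofFn (fun i : Fin m => f (σ i.castSucc)) with hP
  have hcons : permList f σ = g1 :: T := by
    rw [permList, List.ofFn_succ, hg1, h00]
  have hsnoc : permList f σ = P ++ [gn] := by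
    rw [permList, List.ofFn_succ', List.concat_eq_append, hgn, hlast]
  set A : LinFun := compList T with hA
  set B : LinFun := compList P with hB
  set F : LinFun := permComp f σ with hF
  have hF1 : F = A.comp g1 := by rw [hF, permComp, hcons, compList_cons]
  have hF2 : F = gn.comp B := by rw [hF, permComp, hsnoc, compList_append_singleton]
  have hlenL : (permList f σ).length = m + 1 := by simp [permList]
  have hlenP : P.length = m := by simp [hP]
  have hrot1 : (permList f σ).rotate 1 = T ++ [g1] := by
    rw [List.rotate_eq_drop_append_take (by omega : 1 ≤ (permList f σ).length), hcons]
    rfl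
  have hshift1 : shiftComp f σ 1 = g1.comp A := by
    rw [shiftComp, hrot1, compList_append_singleton]
  have hrotm : (permList f σ).rotate m = gn :: P := by
    rw [List.rotate_eq_drop_append_take (by omega : m ≤ (permList f σ).length), hsnoc,
      List.drop_left' hlenP, List.take_left' hlenP]
    rfl
  have hshiftm : shiftComp f σ m = B.comp gn := by
    rw [shiftComp, hrotm, compList_cons]
  have e1 : (shiftComp f σ 1).b - F.b = crossL g1 F := by
    rw [hshift1, hF1]; simp only [crossL, LinFun.comp]; ring
  have e2 : crossL F gn = gn.a * ((shiftComp f σ m).b - F.b) := by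
    rw [hshiftm, hF2]; simp only [crossL, LinFun.comp]; ring
  have hgna : 0 < gn.a := hf _
  constructor
  · intro h
    rw [lt_min_iff] at h
    have hc1 : 0 < crossL g1 F := by rw [← e1]; linarith [h.1]
    have hc2 : 0 < crossL F gn := by
      rw [e2]; exact mul_pos hgna (by linarith [h.2])
    have hFid : ¬ F.IsId := notId_right (ne_of_gt hc1)
    have hg1id : ¬ g1.IsId := notId_left (ne_of_gt hc1)
    have hgnid : ¬ gn.IsId := notId_right (ne_of_gt hc2)
    refine ⟨hFid, hg1id, hgnid, ?_⟩
    have hwF : czL F ≠ 0 := czL_ne_zero hFid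
    have hφ : Cong (F.theta + Real.pi) ((-czL F).arg) := by
      obtain ⟨k, hk⟩ := cong_theta_arg F
      refine cong_trans' (⟨k, by linarith⟩ : Cong (F.theta + Real.pi) ((czL F).arg + Real.pi)) ?_
      refine angle_sub _ _ ?_
      rw [Real.Angle.coe_add]
      exact (Complex.arg_neg_coe_angle hwF).symm
    refine master (czL_ne_zero hgnid) (czL_ne_zero hg1id) (neg_ne_zero.2 hwF) ?_ ?_ hφ
      (cong_theta_arg gn) (cong_theta_arg g1)
    · show 0 < (czL gn).re * (-czL F).im - (czL gn).im * (-czL F).re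
      simp only [czL, Complex.neg_im, Complex.neg_re]
      simp only [crossL] at hc2
      linarith [hc2]
    · show 0 < (-czL F).re * (czL g1).im - (-czL F).im * (czL g1).re
      simp only [czL, Complex.neg_im, Complex.neg_re]
      simp only [crossL] at hc1
      linarith [hc1]
  · intro h
    rw [gt_iff_lt, max_lt_iff] at h
    have hc1 : crossL g1 F < 0 := by rw [← e1]; linarith [h.1]
    have hc2 : crossL F gn < 0 := by
      rw [e2]
      have : (shiftComp f σ m).b - F.b < 0 := by linarith [h.2]
      exact mul_neg_of_pos_of_neg hgna this
    have hFid : ¬ F.IsId := notId_right (ne_of_lt hc1)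
    have hg1id : ¬ g1.IsId := notId_left (ne_of_lt hc1)
    have hgnid : ¬ gn.IsId := notId_right (ne_of_lt hc2)
    refine ⟨hFid, hg1id, hgnid, ?_⟩
    refine master (czL_ne_zero hgnid) (czL_ne_zero hg1id) (czL_ne_zero hFid) ?_ ?_
      (cong_theta_arg F) (cong_theta_arg gn) (cong_theta_arg g1)
    · show 0 < (czL gn).re * (czL F).im - (czL gn).im * (czL F).re
      simp only [czL]
      simp only [crossL] at hc2
      linarith [hc2]
    · show 0 < (czL F).re * (czL g1).im - (czL F).im * (czL g1).re
      simp only [czL]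
      simp only [crossL] at hc1
      linarith [hc1]
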